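/- arXiv:2511.19675 — 2 statements merged into one kernel-verified Lean document; each statement's English description precedes it below -/
import Mathlib

section
/- Let f, g₁,…,g_m : ℝⁿ → ℝ be differentiable, α > 0, w₁,…,w_m > 0, let A ⊆ {1,…,m}, and let x be feasible with MFCQ holding at x. If u = 0 is a minimizer of (1/2)‖u + ∇f(x)‖² over {u ∈ ℝⁿ : ⟨∇g_i(x), u⟩ ≤ −α g_i(x) − w_i‖u‖² for all i ∈ A}, then x is a KKT point of the original problem of minimizing f subject to g_i ≤ 0 for all i ∈ {1,…,m}. -/
open scoped RealInnerProductSpace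
open Filter Topology

section FarkasAux

variable {H : Type*} [NormedAddCommGroup H] [InnerProductSpace ℝ H]

variable {H : Type*} [NormedAddCommGroup H] [InnerProductSpace ℝ H]

lemma farkas_fin : ∀ (k : ℕ) (a : Fin k → H) (b : H),
    (∀ u : H, (∀ i, ⟪a i, u⟫ ≤ 0) → ⟪b, u⟫ ≤ 0) →
    ∃ μ : Fin k → ℝ, (∀ i, 0 ≤ μ i) ∧ b = ∑ i, μ i • a i := by
  intro k
  induction k with
  | zero =>
    intro a b h
    refine ⟨0, fun i => le_rfl, ?_⟩
    have hb := h b (fun i => i.elim0)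
    have : b = 0 := by
      have := real_inner_self_nonpos.mp hb
      exact this
    simp [this]
  | succ k ih =>
    intro a b h
    by_cases hk : ∀ u : H, (∀ i : Fin k, ⟪a i.castSucc, u⟫ ≤ 0) → ⟪b, u⟫ ≤ 0
    · obtain ⟨μ, hμ, hsum⟩ := ih (fun i => a i.castSucc) b hk
      refine ⟨Fin.snoc μ 0, ?_, ?_⟩
      · intro i
        induction i using Fin.lastCases with
        | last => simp
        | cast j => simpa using hμ j
      · rw [Fin.sum_univ_castSucc]
        simpa using hsum
    · push_neg at hk
      obtain ⟨u₀, hu₀a, hu₀b⟩ := hk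
      set aN := a (Fin.last k) with haN
      have ht : 0 < ⟪aN, u₀⟫ := by
        by_contra hle
        push_neg at hle
        have := h u₀ (fun i => by
          induction i using Fin.lastCases with
          | last => exact hle
          | cast j => exact hu₀a j)
        linarith
      set t := ⟪aN, u₀⟫ with htdef
      have htne : t ≠ 0 := ne_of_gt ht
      set a' : Fin k → H := fun i => a i.castSucc - (⟪a i.castSucc, u₀⟫ / t) • aN with ha'
      set b' : H := b - (⟪b, u₀⟫ / t) • aN with hb'
      have hswap : ∀ (v u : H), ⟪v - (⟪v, u₀⟫ / t) • aN, u⟫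
          = ⟪v, u - (⟪aN, u⟫ / t) • u₀⟫ := by
        intro v u
        rw [inner_sub_left, inner_sub_right, real_inner_smul_left, real_inner_smul_right]
        ring
      have hkey : ∀ u : H, (∀ i : Fin k, ⟪a' i, u⟫ ≤ 0) → ⟪b', u⟫ ≤ 0 := by
        intro u hu
        set u' := u - (⟪aN, u⟫ / t) • u₀ with hu'
        have h1 : ∀ i : Fin (k+1), ⟪a i, u'⟫ ≤ 0 := by
          intro i
          induction i using Fin.lastCases with
          | last =>
            rw [hu', inner_sub_right, real_inner_smul_right]
            rw [← haN]
            field_simp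
            rw [← htdef]; simp
          | cast j =>
            have := hu j
            rwa [ha', hswap] at this
        have := h u' h1
        rwa [hb', hswap]
      obtain ⟨μ, hμ, hsum⟩ := ih a' b' hkey
      set c : ℝ := ⟪b, u₀⟫ / t - ∑ i, μ i * (⟪a i.castSucc, u₀⟫ / t) with hc
      have hcpos : 0 ≤ c := by
        rw [hc, sub_nonneg]
        have h1 : ∑ i, μ i * (⟪a i.castSucc, u₀⟫ / t) ≤ 0 := by
          apply Finset.sum_nonpos
          intro i _
          apply mul_nonpos_of_nonneg_of_nonpos (hμ i)
          exact div_nonpos_of_nonpos_of_nonneg (hu₀a i) (le_of_lt ht)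
        have h2 : 0 ≤ ⟪b, u₀⟫ / t := le_of_lt (div_pos hu₀b ht)
        linarith
      refine ⟨Fin.snoc μ c, ?_, ?_⟩
      · intro i
        induction i using Fin.lastCases with
        | last => simpa using hcpos
        | cast j => simpa using hμ j
      · rw [Fin.sum_univ_castSucc]
        simp only [Fin.snoc_castSucc, Fin.snoc_last]
        have : b = b' + (⟪b, u₀⟫ / t) • aN := by rw [hb']; abel
        rw [this, hsum]
        rw [hc, sub_smul, Finset.sum_smul]
        simp only [ha', smul_sub, smul_smul, Finset.sum_sub_distrib]
        abel

lemma farkas {ι : Type*} [Fintype ι] (a : ι → H) (b : H)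
    (h : ∀ u : H, (∀ i, ⟪a i, u⟫ ≤ 0) → ⟪b, u⟫ ≤ 0) :
    ∃ μ : ι → ℝ, (∀ i, 0 ≤ μ i) ∧ b = ∑ i, μ i • a i := by
  obtain ⟨μ, hμ, hsum⟩ := farkas_fin (Fintype.card ι) (a ∘ (Fintype.equivFin ι).symm) b
    (fun u hu => h u (fun i => by simpa using hu (Fintype.equivFin ι i)))
  refine ⟨fun i => μ (Fintype.equivFin ι i), fun i => hμ _, ?_⟩
  rw [hsum]
  exact (Fintype.sum_equiv (Fintype.equivFin ι) _ _ (fun i => by simp)).symm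

end FarkasAux

/-- If `u = 0` minimizes the active-set direction-finding QCQP at
a feasible point `x` satisfying MFCQ, then `x` is a KKT point of the original
problem with all `m` constraints. -/
theorem zero_minimizer_active_set_implies_KKT {n m : ℕ}
    (f : EuclideanSpace ℝ (Fin n) → ℝ)
    (g : Fin m → EuclideanSpace ℝ (Fin n) → ℝ)
    (hf : Differentiable ℝ f)
    (hg : ∀ i, Differentiable ℝ (g i))
    (α : ℝ) (hα : 0 < α)
    (w : Fin m → ℝ) (hw : ∀ i, 0 < w i)
    (A : Set (Fin m))
    (x : EuclideanSpace ℝ (Fin n))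
    (hfeas : ∀ i, g i x ≤ 0)
    (hMFCQ : ∃ d : EuclideanSpace ℝ (Fin n),
      ∀ i, g i x = 0 → ⟪gradient (g i) x, d⟫ < 0)
    (hmem : (0 : EuclideanSpace ℝ (Fin n)) ∈
      {u : EuclideanSpace ℝ (Fin n) |
        ∀ i ∈ A, ⟪gradient (g i) x, u⟫ ≤ -α * g i x - w i * ‖u‖ ^ 2})
    (hmin : IsMinOn
      (fun u : EuclideanSpace ℝ (Fin n) => (1 / 2) * ‖u + gradient f x‖ ^ 2)
      {u : EuclideanSpace ℝ (Fin n) |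
        ∀ i ∈ A, ⟪gradient (g i) x, u⟫ ≤ -α * g i x - w i * ‖u‖ ^ 2} 0) :
    ∃ lam : Fin m → ℝ,
      (∀ i, 0 ≤ lam i) ∧
      gradient f x + ∑ i, lam i • gradient (g i) x = 0 ∧
      (∀ i, g i x ≤ 0) ∧
      (∀ i, lam i * g i x = 0) := by
  classical
  obtain ⟨d, hd⟩ := hMFCQ
  set c := gradient f x with hc
  -- Step 1: strict feasible directions have nonnegative inner product with c
  have hstrict : ∀ v : EuclideanSpace ℝ (Fin n),
      (∀ i ∈ A, g i x = 0 → ⟪gradient (g i) x, v⟫ < 0) → 0 ≤ ⟪c, v⟫ := by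
    intro v hv
    by_cases hv0 : v = 0
    · simp [hv0]
    have hvn : 0 < ‖v‖ := norm_pos_iff.mpr hv0
    have hfeasdir : ∀ i ∈ A, ∀ᶠ t : ℝ in 𝓝[>] 0,
        ⟪gradient (g i) x, t • v⟫ ≤ -α * g i x - w i * ‖t • v‖ ^ 2 := by
      intro i hiA
      rcases eq_or_lt_of_le (hfeas i) with hg0 | hglt
      · -- active constraint
        have hav : ⟪gradient (g i) x, v⟫ < 0 := hv i hiA hg0
        have hpos : 0 < w i * ‖v‖ ^ 2 := mul_pos (hw i) (pow_pos hvn 2)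
        have hδ : 0 < -⟪gradient (g i) x, v⟫ / (w i * ‖v‖ ^ 2) :=
          div_pos (by linarith) hpos
        filter_upwards [Ioo_mem_nhdsGT_of_mem (Set.mem_Ico.mpr ⟨le_refl (0:ℝ), hδ⟩)]
          with t ht
        obtain ⟨ht0, htδ⟩ := ht
        rw [real_inner_smul_right, norm_smul, Real.norm_eq_abs, abs_of_pos ht0, hg0]
        have h1 : t * (w i * ‖v‖ ^ 2) < -⟪gradient (g i) x, v⟫ :=
          (lt_div_iff₀ hpos).mp htδ
        nlinarith [mul_lt_mul_of_pos_left h1 ht0]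
      · -- inactive constraint
        set D := |⟪gradient (g i) x, v⟫| + w i * ‖v‖ ^ 2 + 1 with hD
        have hDpos : 0 < D := by
          have h1 : 0 ≤ |⟪gradient (g i) x, v⟫| := abs_nonneg _
          have h2 : 0 ≤ w i * ‖v‖ ^ 2 := mul_nonneg (hw i).le (sq_nonneg _)
          rw [hD]; linarith
        have hδ : 0 < min 1 ((-α * g i x) / D) := by
          apply lt_min one_pos
          apply div_pos (by nlinarith) hDpos
        filter_upwards [Ioo_mem_nhdsGT_of_mem (Set.mem_Ico.mpr ⟨le_refl (0:ℝ), hδ⟩)]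
          with t ht
        obtain ⟨ht0, htδ⟩ := ht
        have ht1 : t < 1 := lt_of_lt_of_le htδ (min_le_left _ _)
        have ht2 : t * D < -α * g i x := by
          have := lt_of_lt_of_le htδ (min_le_right _ _)
          rw [lt_div_iff₀ hDpos] at this
          exact this
        rw [real_inner_smul_right, norm_smul, Real.norm_eq_abs, abs_of_pos ht0]
        have habs : t * ⟪gradient (g i) x, v⟫ ≤ t * |⟪gradient (g i) x, v⟫| :=
          mul_le_mul_of_nonneg_left (le_abs_self _) (le_of_lt ht0)
        have htt : t ^ 2 ≤ t := by nlinarith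
        have key : w i * (t * ‖v‖) ^ 2 ≤ t * (w i * ‖v‖ ^ 2) := by
          nlinarith [mul_nonneg (hw i).le (sq_nonneg ‖v‖)]
        have hTD : t * |⟪gradient (g i) x, v⟫| + t * (w i * ‖v‖ ^ 2) = t * D - t := by
          rw [hD]; ring
        linarith
    have hall : ∀ᶠ t : ℝ in 𝓝[>] 0, ∀ i ∈ A,
        ⟪gradient (g i) x, t • v⟫ ≤ -α * g i x - w i * ‖t • v‖ ^ 2 :=
      (eventually_all_finite (Set.toFinite A)).2 hfeasdir
    have hev : ∀ᶠ t : ℝ in 𝓝[>] 0, -(t * ‖v‖ ^ 2) / 2 ≤ ⟪v, c⟫ := by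
      filter_upwards [hall, self_mem_nhdsWithin] with t htS ht0
      have hmem' : t • v ∈ {u : EuclideanSpace ℝ (Fin n) |
          ∀ i ∈ A, ⟪gradient (g i) x, u⟫ ≤ -α * g i x - w i * ‖u‖ ^ 2} := htS
      have hle := isMinOn_iff.mp hmin (t • v) hmem'
      simp only [zero_add] at hle
      rw [norm_add_sq_real, norm_smul, Real.norm_eq_abs,
        abs_of_pos (Set.mem_Ioi.mp ht0), real_inner_smul_left, mul_pow] at hle
      have ht0' : (0:ℝ) < t := Set.mem_Ioi.mp ht0
      nlinarith [sq_nonneg ‖v‖]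
    have hcont : Continuous (fun t : ℝ => -(t * ‖v‖ ^ 2) / 2) := by fun_prop
    have htend : Tendsto (fun t : ℝ => -(t * ‖v‖ ^ 2) / 2) (𝓝[>] 0) (𝓝 0) := by
      have h2 := (hcont.tendsto 0).mono_left (nhdsWithin_le_nhds (s := Set.Ioi (0:ℝ)))
      simpa using h2
    have := le_of_tendsto htend hev
    rwa [real_inner_comm] at this
  -- Step 2: relax to non-strict via MFCQ
  have hnonstrict : ∀ u : EuclideanSpace ℝ (Fin n),
      (∀ i ∈ A, g i x = 0 → ⟪gradient (g i) x, u⟫ ≤ 0) → 0 ≤ ⟪c, u⟫ := by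
    intro u hu
    have hε : ∀ ε : ℝ, 0 < ε → 0 ≤ ⟪c, u⟫ + ε * ⟪c, d⟫ := by
      intro ε hε
      have := hstrict (u + ε • d) (fun i hiA hg0 => by
        rw [inner_add_right, real_inner_smul_right]
        have h1 := hu i hiA hg0
        have h2 := hd i hg0
        nlinarith)
      rwa [inner_add_right, real_inner_smul_right] at this
    have hcont : Continuous (fun ε : ℝ => ⟪c, u⟫ + ε * ⟪c, d⟫) := by fun_prop
    have htend : Tendsto (fun ε : ℝ => ⟪c, u⟫ + ε * ⟪c, d⟫) (𝓝[>] 0) (𝓝 ⟪c, u⟫) := by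
      have h2 := (hcont.tendsto 0).mono_left (nhdsWithin_le_nhds (s := Set.Ioi (0:ℝ)))
      simpa using h2
    exact ge_of_tendsto htend (eventually_nhdsWithin_of_forall fun ε hε' => hε ε hε')
  -- Step 3: Farkas
  obtain ⟨μ, hμ, hsum⟩ := farkas
    (fun i : {i : Fin m // i ∈ A ∧ g i x = 0} => gradient (g i.1) x) (-c)
    (fun u hu => by
      rw [inner_neg_left, neg_nonpos]
      exact hnonstrict u fun i hiA hg0 => hu ⟨i, hiA, hg0⟩)
  refine ⟨fun i => if h : i ∈ A ∧ g i x = 0 then μ ⟨i, h⟩ else 0, ?_, ?_, hfeas, ?_⟩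
  · intro i
    by_cases h : i ∈ A ∧ g i x = 0
    · simpa [h] using hμ ⟨i, h⟩
    · simp [h]
  · have hsplit : ∑ i : Fin m,
        (if h : i ∈ A ∧ g i x = 0 then μ ⟨i, h⟩ else 0) • gradient (g i) x
        = ∑ i : {i : Fin m // i ∈ A ∧ g i x = 0}, μ i • gradient (g i.1) x := by
      rw [← Finset.sum_filter_add_sum_filter_not Finset.univ
        (fun i => i ∈ A ∧ g i x = 0)]
      have h2 : ∑ i ∈ Finset.univ.filter (fun i => ¬(i ∈ A ∧ g i x = 0)),
          (if h : i ∈ A ∧ g i x = 0 then μ ⟨i, h⟩ else 0) • gradient (g i) x = 0 := by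
        apply Finset.sum_eq_zero
        intro i hi
        rw [Finset.mem_filter] at hi
        simp [hi.2]
      rw [h2, add_zero]
      rw [Finset.sum_subtype (p := fun i : Fin m => i ∈ A ∧ g i x = 0)
        (Finset.univ.filter (fun i => i ∈ A ∧ g i x = 0))
        (fun i => by simp)
        (fun i => (if h : i ∈ A ∧ g i x = 0 then μ ⟨i, h⟩ else 0) • gradient (g i) x)]
      apply Finset.sum_congr rfl
      intro i _
      simp [i.2]
    rw [hsplit, ← hsum]
    simp
  · intro i
    by_cases h : i ∈ A ∧ g i x = 0
    · simp [h, h.2]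
    · simp [h]
end

section
/- Let f be L_f-smooth and g_i be L_i-smooth (L_f, L_i > 0) for i = 1,…,m, let γ ∈ (0,1), α > 0, δ > 0, w̲ > 0, and suppose the feasible set F = {x : g_i(x) ≤ 0 for all i} is compact. Then there exists t̲ > 0 such that for every x ∈ F, every index set A ⊆ {1,…,m} with {i : g_i(x) ≥ −δ} ⊆ A, every choice of weights w_i ≥ w̲, and every minimizer u of (1/2)‖u + ∇f(x)‖² over {u ∈ ℝⁿ : ⟨∇g_i(x), u⟩ ≤ −α g_i(x) − w_i‖u‖² for all i ∈ A}, the following hold for all t ∈ [0, t̲]: g_i(x + t·u) ≤ 0 for all i ∈ {1,…,m}, and f(x + t·u) ≤ f(x) + γ·t·⟨∇f(x), u⟩. -/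
open scoped RealInnerProductSpace

private lemma line_deriv {n : ℕ} (h : EuclideanSpace ℝ (Fin n) → ℝ)
    (hd : Differentiable ℝ h) (x u : EuclideanSpace ℝ (Fin n)) (s : ℝ) :
    HasDerivAt (fun s : ℝ => h (x + s • u)) ⟪gradient h (x + s • u), u⟫ s := by
  have hline : HasDerivAt (fun s : ℝ => x + s • u) u s := by
    simpa using ((hasDerivAt_id s).smul_const u).const_add x
  have hg := (hd (x + s • u)).hasGradientAt
  have hF := hg.hasFDerivAt
  have := hF.comp_hasDerivAt s hline
  simpa [InnerProductSpace.toDual_apply_apply, Function.comp_def] using this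

private lemma descent {n : ℕ} (h : EuclideanSpace ℝ (Fin n) → ℝ)
    (hd : Differentiable ℝ h) (C : ℝ)
    (hlip : ∀ y z, ‖gradient h y - gradient h z‖ ≤ C * ‖y - z‖)
    (x u : EuclideanSpace ℝ (Fin n)) (t : ℝ) (ht : 0 ≤ t) :
    h (x + t • u) ≤ h x + t * ⟪gradient h x, u⟫ + C / 2 * t ^ 2 * ‖u‖ ^ 2 := by
  rcases ht.eq_or_lt with rfl | ht
  · simp
  set c : ℝ := ⟪gradient h x, u⟫ with hc
  set ψ : ℝ → ℝ := fun s => h (x + s • u) - s * c - C / 2 * s ^ 2 * ‖u‖ ^ 2 with hψ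
  have hder : ∀ s : ℝ, HasDerivAt ψ
      (⟪gradient h (x + s • u), u⟫ - c - C * s * ‖u‖ ^ 2) s := by
    intro s
    have h1 := line_deriv h hd x u s
    have h2 : HasDerivAt (fun s : ℝ => s * c) c s := by
      simpa using (hasDerivAt_id s).mul_const c
    have h3 : HasDerivAt (fun s : ℝ => C / 2 * s ^ 2 * ‖u‖ ^ 2) (C * s * ‖u‖ ^ 2) s := by
      have := ((hasDerivAt_pow 2 s).const_mul (C / 2)).mul_const (‖u‖ ^ 2)
      rw [show C * s * ‖u‖ ^ 2 = C / 2 * (↑(2:ℕ) * s ^ (2 - 1)) * ‖u‖ ^ 2 by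
        rw [show (2:ℕ) - 1 = 1 from rfl]; push_cast; ring]
      exact this
    exact (h1.sub h2).sub h3
  have hanti : AntitoneOn ψ (Set.Icc 0 t) := by
    apply antitoneOn_of_deriv_nonpos (convex_Icc 0 t)
    · exact fun s _ => ((hder s).continuousAt).continuousWithinAt
    · intro s hs
      rw [interior_Icc] at hs
      exact ((hder s).differentiableAt).differentiableWithinAt
    · intro s hs
      rw [interior_Icc] at hs
      rw [(hder s).deriv]
      have hinner : ⟪gradient h (x + s • u) - gradient h x, u⟫ ≤
          ‖gradient h (x + s • u) - gradient h x‖ * ‖u‖ := real_inner_le_norm _ _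
      have hlipb : ‖gradient h (x + s • u) - gradient h x‖ ≤ C * (s * ‖u‖) := by
        have := hlip (x + s • u) x
        simpa [norm_smul, abs_of_nonneg hs.1.le] using this
      have hsplit : ⟪gradient h (x + s • u) - gradient h x, u⟫ =
          ⟪gradient h (x + s • u), u⟫ - c := by
        rw [inner_sub_left, hc]
      have hnu : (0:ℝ) ≤ ‖u‖ := norm_nonneg u
      nlinarith [mul_le_mul_of_nonneg_right hlipb hnu]
  have := hanti (Set.left_mem_Icc.2 ht.le) (Set.right_mem_Icc.2 ht.le) ht.le
  simp only [hψ] at this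
  have h0 : h (x + (0:ℝ) • u) - 0 * c - C / 2 * (0:ℝ) ^ 2 * ‖u‖ ^ 2 = h x := by simp
  rw [h0] at this
  linarith [this]

private lemma arith_inactive (gx inn Li t u2 G M Lm δ D : ℝ)
    (h1 : gx < -δ) (h2 : inn ≤ G * M) (h3 : Li ≤ Lm) (h4 : 0 ≤ Li)
    (h5 : 0 ≤ t) (h6 : t ≤ 1) (h7 : 0 ≤ u2) (h8 : u2 ≤ M ^ 2)
    (h9 : t * D ≤ δ) (h10 : D = G * M + Lm / 2 * M ^ 2 + 1) :
    gx + t * inn + Li / 2 * t ^ 2 * u2 ≤ 0 := by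
  have hM2 : 0 ≤ M ^ 2 := le_trans h7 h8
  have s1 : t * inn ≤ t * (G * M) := mul_le_mul_of_nonneg_left h2 h5
  have e1 : Li / 2 * t ^ 2 * u2 ≤ Li / 2 * t ^ 2 * M ^ 2 := by
    nlinarith [mul_nonneg h4 (sq_nonneg t)]
  have e2 : Li / 2 * t ^ 2 * M ^ 2 ≤ Lm / 2 * t ^ 2 * M ^ 2 := by
    nlinarith [mul_nonneg (sq_nonneg t) hM2]
  have e3 : Lm / 2 * t ^ 2 * M ^ 2 ≤ Lm / 2 * t * M ^ 2 := by
    have hLm : 0 ≤ Lm := le_trans h4 h3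
    have ht2 : t ^ 2 ≤ t := by nlinarith
    nlinarith [mul_nonneg hLm hM2]
  nlinarith

private lemma arith_f (fx fy c t Lf γ u2 : ℝ)
    (hdesc : fy ≤ fx + t * c + Lf / 2 * t ^ 2 * u2)
    (hc : c ≤ -(1 / 2) * u2) (h5 : 0 ≤ t) (hLft : Lf * t ≤ 1 - γ)
    (hγ1 : γ < 1) (hu2 : 0 ≤ u2) :
    fy ≤ fx + γ * t * c := by
  nlinarith [mul_le_mul_of_nonneg_left hc (by nlinarith : (0:ℝ) ≤ (1 - γ) * t),
    mul_le_mul_of_nonneg_right hLft (mul_nonneg h5 hu2)]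

set_option maxHeartbeats 4000000 in
/-- Uniform step-size lower bound for the backtracking line
search of the active-set SS-QCQP algorithm over a compact feasible set. -/
theorem ssqcqp_as_uniform_step_size {n m : ℕ}
    (f : EuclideanSpace ℝ (Fin n) → ℝ)
    (g : Fin m → EuclideanSpace ℝ (Fin n) → ℝ)
    (hf : Differentiable ℝ f)
    (hg : ∀ i, Differentiable ℝ (g i))
    (Lf : ℝ) (hLf : 0 < Lf)
    (hflip : ∀ y z : EuclideanSpace ℝ (Fin n),
      ‖gradient f y - gradient f z‖ ≤ Lf * ‖y - z‖)
    (L : Fin m → ℝ) (hL : ∀ i, 0 < L i)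
    (hglip : ∀ i, ∀ y z : EuclideanSpace ℝ (Fin n),
      ‖gradient (g i) y - gradient (g i) z‖ ≤ L i * ‖y - z‖)
    (γ : ℝ) (hγ : γ ∈ Set.Ioo (0 : ℝ) 1)
    (α : ℝ) (hα : 0 < α)
    (δ : ℝ) (hδ : 0 < δ)
    (wl : ℝ) (hwl : 0 < wl)
    (F : Set (EuclideanSpace ℝ (Fin n)))
    (hF : F = {x | ∀ i, g i x ≤ 0})
    (hcompact : IsCompact F) :
    ∃ tl : ℝ, 0 < tl ∧
      ∀ x ∈ F, ∀ A : Set (Fin m), {i : Fin m | g i x ≥ -δ} ⊆ A →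
        ∀ w : Fin m → ℝ, (∀ i, wl ≤ w i) →
        ∀ u : EuclideanSpace ℝ (Fin n),
          u ∈ {v : EuclideanSpace ℝ (Fin n) |
            ∀ i ∈ A, ⟪gradient (g i) x, v⟫ ≤ -α * g i x - w i * ‖v‖ ^ 2} →
          IsMinOn
            (fun v : EuclideanSpace ℝ (Fin n) => (1 / 2) * ‖v + gradient f x‖ ^ 2)
            {v : EuclideanSpace ℝ (Fin n) |
              ∀ i ∈ A, ⟪gradient (g i) x, v⟫ ≤ -α * g i x - w i * ‖v‖ ^ 2} u →
          ∀ t ∈ Set.Icc (0 : ℝ) tl,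
            (∀ i, g i (x + t • u) ≤ 0) ∧
            f (x + t • u) ≤ f x + γ * t * ⟪gradient f x, u⟫ := by
  obtain ⟨hγ0, hγ1⟩ := hγ
  have hcontf : ContinuousOn (fun x => gradient f x) F := by
    apply Continuous.continuousOn
    apply (LipschitzWith.of_dist_le_mul (K := ⟨Lf, hLf.le⟩) ?_).continuous
    intro y z
    rw [dist_eq_norm, dist_eq_norm]; exact hflip y z
  obtain ⟨Gf0, hGf0⟩ := hcompact.exists_bound_of_continuousOn hcontf
  set Gf : ℝ := max Gf0 0 with hGfdef
  have hGf : ∀ x ∈ F, ‖gradient f x‖ ≤ Gf := fun x hx => (hGf0 x hx).trans (le_max_left _ _)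
  have hGfnn : 0 ≤ Gf := le_max_right _ _
  set M : ℝ := 2 * Gf with hMdef
  have hMnn : 0 ≤ M := by positivity
  have hGg : ∀ i : Fin m, ∃ C : ℝ, 0 ≤ C ∧ ∀ x ∈ F, ‖gradient (g i) x‖ ≤ C := by
    intro i
    have hconti : ContinuousOn (fun x => gradient (g i) x) F := by
      apply Continuous.continuousOn
      apply (LipschitzWith.of_dist_le_mul (K := ⟨L i, (hL i).le⟩) ?_).continuous
      intro y z
      rw [dist_eq_norm, dist_eq_norm]; exact hglip i y z
    obtain ⟨C, hC⟩ := hcompact.exists_bound_of_continuousOn hconti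
    exact ⟨max C 0, le_max_right _ _, fun x hx => (hC x hx).trans (le_max_left _ _)⟩
  choose Gg hGgnn hGgb using hGg
  obtain ⟨G0, hG0⟩ := Finite.exists_le Gg
  set G : ℝ := max G0 0 with hGdef
  have hGnn : 0 ≤ G := le_max_right _ _
  have hGb : ∀ i : Fin m, ∀ x ∈ F, ‖gradient (g i) x‖ ≤ G := fun i x hx =>
    (hGgb i x hx).trans ((hG0 i).trans (le_max_left _ _))
  obtain ⟨L0, hL0⟩ := Finite.exists_le L
  set Lm : ℝ := max L0 1 with hLmdef
  have hLmpos : 0 < Lm := lt_of_lt_of_le one_pos (le_max_right _ _)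
  have hLmb : ∀ i, L i ≤ Lm := fun i => (hL0 i).trans (le_max_left _ _)
  set D : ℝ := G * M + Lm / 2 * M ^ 2 + 1 with hDdef
  have hDpos : 0 < D := by positivity
  refine ⟨min ((1 - γ) / Lf) (min α⁻¹ (min (2 * wl / Lm) (min 1 (δ / D)))), ?_, ?_⟩
  · have h1γ : 0 < 1 - γ := by linarith
    positivity
  intro x hx A hA w hw u hu hmin t ht
  obtain ⟨ht0, htl⟩ := ht
  have ht1 : t ≤ (1 - γ) / Lf := le_trans htl (min_le_left _ _)
  have ht2 : t ≤ α⁻¹ := le_trans htl (le_trans (min_le_right _ _) (min_le_left _ _))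
  have ht3 : t ≤ 2 * wl / Lm := le_trans htl (le_trans (min_le_right _ _)
    (le_trans (min_le_right _ _) (min_le_left _ _)))
  have ht4 : t ≤ 1 := le_trans htl (le_trans (min_le_right _ _) (le_trans (min_le_right _ _)
    (le_trans (min_le_right _ _) (min_le_left _ _))))
  have ht5 : t ≤ δ / D := le_trans htl (le_trans (min_le_right _ _) (le_trans (min_le_right _ _)
    (le_trans (min_le_right _ _) (min_le_right _ _))))
  have hxfeas : ∀ i, g i x ≤ 0 := by rw [hF] at hx; exact hx
  have h0mem : (0 : EuclideanSpace ℝ (Fin n)) ∈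
      {v : EuclideanSpace ℝ (Fin n) |
        ∀ i ∈ A, ⟪gradient (g i) x, v⟫ ≤ -α * g i x - w i * ‖v‖ ^ 2} := by
    intro i _
    simp only [inner_zero_right, norm_zero]
    nlinarith [hxfeas i, hα]
  have hmin0 := isMinOn_iff.mp hmin 0 h0mem
  set p : EuclideanSpace ℝ (Fin n) := gradient f x with hp
  have hexp : ‖u + p‖ ^ 2 = ‖u‖ ^ 2 + 2 * ⟪u, p⟫ + ‖p‖ ^ 2 := norm_add_sq_real u p
  have hzexp : ‖(0 : EuclideanSpace ℝ (Fin n)) + p‖ ^ 2 = ‖p‖ ^ 2 := by simp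
  rw [hzexp] at hmin0
  have hinner_up : ⟪p, u⟫ ≤ -(1 / 2) * ‖u‖ ^ 2 := by
    have hs : ⟪p, u⟫ = ⟪u, p⟫ := real_inner_comm u p
    linarith [hmin0, hexp]
  have hpb : ‖p‖ ≤ Gf := hGf x hx
  have hub : ‖u‖ ≤ M := by
    have hsq : ‖u + p‖ ^ 2 ≤ ‖p‖ ^ 2 := by linarith [hmin0]
    have h1 : ‖u + p‖ ≤ ‖p‖ := by
      nlinarith [norm_nonneg (u + p), norm_nonneg p]
    have h2 : ‖u‖ ≤ ‖u + p‖ + ‖p‖ := by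
      have : u = (u + p) - p := by abel
      calc ‖u‖ = ‖(u + p) - p‖ := by rw [← this]
        _ ≤ ‖u + p‖ + ‖p‖ := norm_sub_le _ _
    calc ‖u‖ ≤ ‖u + p‖ + ‖p‖ := h2
      _ ≤ 2 * ‖p‖ := by linarith
      _ ≤ M := by rw [hMdef]; linarith
  have hunn : (0:ℝ) ≤ ‖u‖ := norm_nonneg u
  constructor
  · -- feasibility of all constraints
    intro i
    have hdesc := descent (g i) (hg i) (L i) (hglip i) x u t ht0
    by_cases hiA : i ∈ A
    · -- active-ish constraint
      have hcon := hu i hiA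
      have htα : t * α ≤ 1 := by
        calc t * α ≤ α⁻¹ * α := by nlinarith
          _ = 1 := inv_mul_cancel₀ hα.ne'
      have hLt : L i * t ≤ 2 * wl := by
        calc L i * t ≤ Lm * t := by nlinarith [ht0, hLmb i]
          _ ≤ Lm * (2 * wl / Lm) := by nlinarith [hLmpos, ht3]
          _ = 2 * wl := by field_simp
      have hwli := hw i
      nlinarith [hxfeas i, sq_nonneg ‖u‖, ht0, mul_nonneg ht0 (sq_nonneg ‖u‖)]
    · -- inactive constraint: g i x < -δ
      have hgix : g i x < -δ := by
        by_contra hcon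
        push_neg at hcon
        exact hiA (hA (by simpa using hcon))
      have hqb : ‖gradient (g i) x‖ ≤ G := hGb i x hx
      have hinb : ⟪gradient (g i) x, u⟫ ≤ G * M := by
        calc ⟪gradient (g i) x, u⟫ ≤ ‖gradient (g i) x‖ * ‖u‖ := real_inner_le_norm _ _
          _ ≤ G * M := by nlinarith [norm_nonneg (gradient (g i) x)]
      have hLi : L i ≤ Lm := hLmb i
      have htD : t * D ≤ δ := by
        have h := mul_le_mul_of_nonneg_right ht5 hDpos.le
        rwa [div_mul_cancel₀ _ hDpos.ne'] at h
      have husq : ‖u‖ ^ 2 ≤ M ^ 2 := pow_le_pow_left₀ hunn hub 2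
      have key := arith_inactive (g i x) ⟪gradient (g i) x, u⟫ (L i) t (‖u‖ ^ 2)
        G M Lm δ D hgix hinb hLi (hL i).le ht0 ht4 (sq_nonneg ‖u‖) husq htD hDdef
      linarith [hdesc, key]
  · -- sufficient decrease
    have hdesc := descent f hf Lf hflip x u t ht0
    have hLft : Lf * t ≤ 1 - γ := by
      calc Lf * t ≤ Lf * ((1 - γ) / Lf) := by nlinarith [hLf]
        _ = 1 - γ := by field_simp
    exact arith_f (f x) (f (x + t • u)) ⟪p, u⟫ t Lf γ (‖u‖ ^ 2) hdesc hinner_up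
      ht0 hLft hγ1 (sq_nonneg ‖u‖)
end
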